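/- arXiv:1802.00291 — 10 statements merged into one kernel-verified Lean document; each statement's English description precedes it below -/
import Mathlib

section
/- There exist infinitely many strong Eulerian triples; that is, the collection of sets {x₁, x₂, x₃} of three distinct rational numbers such that x₁x₂+x₁+x₂, x₁x₃+x₁+x₃, x₂x₃+x₂+x₃, x₁²+2x₁, x₂²+2x₂ and x₃²+2x₃ are all squares of rational numbers is infinite. -/
/-- A strong Eulerian triple: a set of three distinct rationals `{x₁, x₂, x₃}` such that
`xᵢxⱼ + xᵢ + xⱼ` is a rational square for all `i < j` and `xᵢ² + 2xᵢ` is a rational square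
for all `i`. -/
def IsStrongEulerianTriple (S : Set ℚ) : Prop :=
  ∃ x₁ x₂ x₃ : ℚ, S = {x₁, x₂, x₃} ∧ x₁ ≠ x₂ ∧ x₁ ≠ x₃ ∧ x₂ ≠ x₃ ∧
    IsSquare (x₁ * x₂ + x₁ + x₂) ∧ IsSquare (x₁ * x₃ + x₁ + x₃) ∧
    IsSquare (x₂ * x₃ + x₂ + x₃) ∧
    IsSquare (x₁ ^ 2 + 2 * x₁) ∧ IsSquare (x₂ ^ 2 + 2 * x₂) ∧ IsSquare (x₃ ^ 2 + 2 * x₃)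

/-!
A square `x = t²` has `x² + 2x` square exactly when `t² + 2` is a square, and the rational
solutions of the latter are `t = (m² - 2) / (2m)`. For two such values `t(m)`, `t(n)` the set
`{0, t(m)², t(n)²}` is then a strong Eulerian triple as soon as
`t(m)² t(n)² + t(m)² + t(n)² = ((m²n² - 4)² + (2(m² - n²))²) / (4mn)²` is a square.
The choice `n = m(m⁴ - 12) / (3m⁴ - 4)` turns the numerator into a square: with `u = m⁴`,
`(u³ - 60u² + 240u - 64)² + (16m²(u² - 16))² = (u³ + 68u² - 272u - 64)²`.
For `m ≥ 5` the three elements are distinct, and the values `t(m)²`, strictly increasing in `m`,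
cannot all lie in finitely many triples.
-/

open Set

section Algebra

variable {K : Type*} [Field K]

def conicParam (m : K) : K := (m ^ 2 - 2) / (2 * m)

def partnerParam (m : K) : K := m * (m ^ 4 - 12) / (3 * m ^ 4 - 4)

theorem sq_add_sq_partnerParam {m : K} (h : 3 * m ^ 4 - 4 ≠ 0) :
    (m ^ 2 * partnerParam m ^ 2 - 4) ^ 2 + (2 * (m ^ 2 - partnerParam m ^ 2)) ^ 2 =
      ((m ^ 12 + 68 * m ^ 8 - 272 * m ^ 4 - 64) / (3 * m ^ 4 - 4) ^ 2) ^ 2 := by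
  rw [partnerParam]
  -- otherwise `field_simp` normalises the denominator to `m ^ 4 * 3 - 4` and no longer sees `h`
  generalize hD : 3 * m ^ 4 - 4 = D at h ⊢
  field_simp
  rw [← hD]
  ring

variable [CharZero K] {m n : K}

theorem isSquare_conicParam_sq_add_two (hm : m ≠ 0) : IsSquare (conicParam m ^ 2 + 2) := by
  refine ⟨(m ^ 2 + 2) / (2 * m), ?_⟩
  unfold conicParam
  field_simp
  ring

theorem conicParam_sq_mul_add (hm : m ≠ 0) (hn : n ≠ 0) :
    conicParam m ^ 2 * conicParam n ^ 2 + conicParam m ^ 2 + conicParam n ^ 2 =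
      ((m ^ 2 * n ^ 2 - 4) ^ 2 + (2 * (m ^ 2 - n ^ 2)) ^ 2) / (4 * m * n) ^ 2 := by
  unfold conicParam
  field_simp
  ring

theorem isSquare_conicParam_sq_mul_add_partnerParam (hm : m ≠ 0) (h₁ : m ^ 4 - 12 ≠ 0)
    (h₂ : 3 * m ^ 4 - 4 ≠ 0) :
    IsSquare (conicParam m ^ 2 * conicParam (partnerParam m) ^ 2 + conicParam m ^ 2 +
      conicParam (partnerParam m) ^ 2) := by
  have hp : partnerParam m ≠ 0 := div_ne_zero (mul_ne_zero hm h₁) h₂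
  refine ⟨(m ^ 12 + 68 * m ^ 8 - 272 * m ^ 4 - 64) / (3 * m ^ 4 - 4) ^ 2 /
    (4 * m * partnerParam m), ?_⟩
  rw [conicParam_sq_mul_add hm hp, sq_add_sq_partnerParam h₂]
  ring

end Algebra

section Order

variable {K : Type*} [Field K] [LinearOrder K] [IsStrictOrderedRing K] {m : K}

theorem strictMonoOn_conicParam : StrictMonoOn (conicParam : K → K) (Ioi 0) := by
  intro x hx y hy hxy
  rw [mem_Ioi] at hx hy
  unfold conicParam
  rw [div_lt_div_iff₀ (by positivity) (by positivity)]
  nlinarith [mul_pos hx hy, mul_pos (mul_pos hx hy) (sub_pos.2 hxy)]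

theorem conicParam_pos (hm : 0 < m) (h : 2 < m ^ 2) : 0 < conicParam m :=
  div_pos (sub_pos.2 h) (by positivity)

theorem strictMonoOn_conicParam_sq : StrictMonoOn (fun m : K => conicParam m ^ 2) (Ici 2) := by
  intro x hx y hy hxy
  rw [mem_Ici] at hx hy
  have hx₀ : 0 < x := by linarith
  exact pow_lt_pow_left₀ (strictMonoOn_conicParam hx₀ (show 0 < y by linarith) hxy)
    (conicParam_pos hx₀ (by nlinarith)).le two_ne_zero

theorem three_halves_le_partnerParam (hm : 5 ≤ m) : 3 / 2 ≤ partnerParam m := by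
  have hu : 125 * m ≤ m ^ 4 := by nlinarith [pow_le_pow_left₀ (by norm_num) hm 3]
  unfold partnerParam
  rw [le_div_iff₀ (by nlinarith)]
  nlinarith [mul_nonneg (sub_nonneg.2 hm) (pow_nonneg (by linarith : (0 : K) ≤ m) 4)]

theorem partnerParam_lt (hm : 0 < m) (h : 4 < 3 * m ^ 4) : partnerParam m < m := by
  unfold partnerParam
  rw [div_lt_iff₀ (by linarith)]
  nlinarith [pow_pos hm 4]

end Order

theorem isStrongEulerianTriple_zero_insert {x y : ℚ} (hx : IsSquare x) (hy : IsSquare y)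
    (hx₂ : IsSquare (x + 2)) (hy₂ : IsSquare (y + 2)) (hxy : IsSquare (x * y + x + y))
    (hx₀ : 0 ≠ x) (hy₀ : 0 ≠ y) (hne : x ≠ y) : IsStrongEulerianTriple {0, x, y} := by
  refine ⟨0, x, y, rfl, hx₀, hy₀, hne, by simpa using hx, by simpa using hy, hxy,
    ⟨0, by ring⟩, ?_, ?_⟩
  · rw [show x ^ 2 + 2 * x = x * (x + 2) by ring]; exact hx.mul hx₂
  · rw [show y ^ 2 + 2 * y = y * (y + 2) by ring]; exact hy.mul hy₂

theorem isStrongEulerianTriple_conicParam {m : ℚ} (hm : 5 ≤ m) :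
    IsStrongEulerianTriple {0, conicParam m ^ 2, conicParam (partnerParam m) ^ 2} := by
  have hm₀ : 0 < m := by linarith
  have hu : 625 ≤ m ^ 4 := by nlinarith [pow_le_pow_left₀ (by norm_num) hm 4]
  have hp := three_halves_le_partnerParam hm
  have hp₀ : 0 < partnerParam m := by linarith
  have htm : 0 < conicParam m := conicParam_pos hm₀ (by nlinarith)
  have htp : 0 < conicParam (partnerParam m) := conicParam_pos hp₀ (by nlinarith)
  have hlt : conicParam (partnerParam m) < conicParam m :=
    strictMonoOn_conicParam hp₀ hm₀ (partnerParam_lt hm₀ (by linarith))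
  exact isStrongEulerianTriple_zero_insert (.sq _) (.sq _)
    (isSquare_conicParam_sq_add_two hm₀.ne') (isSquare_conicParam_sq_add_two hp₀.ne')
    (isSquare_conicParam_sq_mul_add_partnerParam hm₀.ne' (by linarith) (by linarith))
    (pow_pos htm 2).ne (pow_pos htp 2).ne (pow_lt_pow_left₀ hlt htp.le two_ne_zero).ne'

theorem IsStrongEulerianTriple.finite {S : Set ℚ} (hS : IsStrongEulerianTriple S) : S.Finite := by
  obtain ⟨x₁, x₂, x₃, rfl, -⟩ := hS
  exact toFinite _

theorem infinitely_many_strong_eulerian_triples :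
    {S : Set ℚ | IsStrongEulerianTriple S}.Infinite := by
  intro hfin
  have hinj : InjOn (fun m : ℚ => conicParam m ^ 2) (Ici 5) :=
    (strictMonoOn_conicParam_sq.mono (Ici_subset_Ici.2 (by norm_num))).injOn
  refine infinite_of_injOn_mapsTo hinj (fun m hm => ?_) (Ici_infinite 5)
    (hfin.sUnion fun S hS => hS.finite)
  exact mem_sUnion_of_mem (by simp) (isStrongEulerianTriple_conicParam hm)
end

section
/- Let b be a rational number. Then both b - 1 and b + 1 are squares of rational numbers if and only if there exists a nonzero rational number u such that b = (4u⁴ + 1)/(4u²). In that case b - 1 = ((2u² - 1)/(2u))² and b + 1 = ((2u² + 1)/(2u))². -/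
/-- `b - 1` and `b + 1` are both rational squares iff `b = (4u⁴ + 1)/(4u²)` for some nonzero
rational `u`; in that case `b - 1 = ((2u² - 1)/(2u))²` and `b + 1 = ((2u² + 1)/(2u))²`. -/
theorem param_of_strong_pair_with_one (b : ℚ) :
    ((IsSquare (b - 1) ∧ IsSquare (b + 1)) ↔
      ∃ u : ℚ, u ≠ 0 ∧ b = (4 * u ^ 4 + 1) / (4 * u ^ 2)) ∧
    (∀ u : ℚ, u ≠ 0 → b = (4 * u ^ 4 + 1) / (4 * u ^ 2) →
      b - 1 = ((2 * u ^ 2 - 1) / (2 * u)) ^ 2 ∧ b + 1 = ((2 * u ^ 2 + 1) / (2 * u)) ^ 2) := by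
  have key : ∀ u : ℚ, u ≠ 0 → b = (4 * u ^ 4 + 1) / (4 * u ^ 2) →
      b - 1 = ((2 * u ^ 2 - 1) / (2 * u)) ^ 2 ∧ b + 1 = ((2 * u ^ 2 + 1) / (2 * u)) ^ 2 := by
    intro u hu hb
    subst hb
    constructor <;> (field_simp; ring)
  refine ⟨⟨?_, ?_⟩, key⟩
  · rintro ⟨⟨α, hα⟩, ⟨β, hβ⟩⟩
    have hne : α + β ≠ 0 := by
      intro h
      have h2 : (α + β) * (β - α) = 2 := by linear_combination hα - hβ
      rw [h, zero_mul] at h2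
      norm_num at h2
    refine ⟨(α + β) / 2, by positivity, ?_⟩
    rw [eq_div_iff (by positivity)]
    nlinarith [hα, hβ]
  · rintro ⟨u, hu, hb⟩
    obtain ⟨h1, h2⟩ := key u hu hb
    exact ⟨⟨(2 * u ^ 2 - 1) / (2 * u), by rw [h1]; ring⟩,
           ⟨(2 * u ^ 2 + 1) / (2 * u), by rw [h2]; ring⟩⟩
end

section
/- For every nonzero rational number u, the point P = (-4(4u⁴ + 1), 16u(4u⁴ + 1)) is a rational point on the elliptic curve Y² = X(X + 32u⁴ + 8)(X + 16u⁴ - 16u² + 4), and P has infinite order in the group of rational points of this curve. -/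
/-!
If `P` had finite order `n`, some point would be twice a rational point: `P` itself when `n` is
odd, the point `T = (n/2) • P` of order two when `4 ∣ n`, and `P + T` when `n ≡ 2 (mod 4)`.
On `y² = x(x + a)(x + b)` the doubles `(x, y) = 2Q` have `x`, `x + a` and `x + b` all squares
(the 2-descent map), and every candidate violates this: by sign, by the odd 2-adic valuation of
`32u⁴ + 8` or of `8(2u² + 1)²`, or because `4u⁴ + 1` is not a square when `u ≠ 0`, which is
Fermat's descent for `x⁴ + 4y⁴ = z²`.
-/

/-- The elliptic curve `Y² = X(X + 32u⁴ + 8)(X + 16u⁴ - 16u² + 4)` as a Weierstrass curve: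
expanding the right-hand side gives `X³ + a₂X² + a₄X` with `a₂ = (32u⁴+8) + (16u⁴-16u²+4)`
and `a₄ = (32u⁴+8)(16u⁴-16u²+4)`. -/
noncomputable def curveE (u : ℚ) : WeierstrassCurve.Affine ℚ :=
  { a₁ := 0, a₂ := (32 * u ^ 4 + 8) + (16 * u ^ 4 - 16 * u ^ 2 + 4), a₃ := 0,
    a₄ := (32 * u ^ 4 + 8) * (16 * u ^ 4 - 16 * u ^ 2 + 4), a₆ := 0 }

theorem Int.exists_sq_of_isCoprime_of_pos {a b c : ℤ} (hab : IsCoprime a b)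
    (heq : a * b = c ^ 2) (ha : 0 < a) : ∃ a₀, a = a₀ ^ 2 := by
  obtain ⟨a₀, h | h⟩ := Int.sq_of_isCoprime hab heq
  · exact ⟨a₀, h⟩
  · nlinarith [sq_nonneg a₀]

def Fermat42Four (x y z : ℤ) : Prop :=
  x ≠ 0 ∧ y ≠ 0 ∧ x ^ 4 + 4 * y ^ 4 = z ^ 2

namespace Fermat42Four

variable {x y z : ℤ}

theorem ne_zero (h : Fermat42Four x y z) : z ≠ 0 := by
  rintro rfl
  have : 0 < x ^ 4 := by have := h.1; positivity
  have : 0 < y ^ 4 := by have := h.2.1; positivity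
  linarith [h.2.2]

theorem exists_of_two_mul_eq_sq {r s c d : ℤ} (hr : 0 < r) (hs : 0 < s) (hrs : IsCoprime r s)
    (h : 2 * r * s = d ^ 2) (hc : r ^ 2 + s ^ 2 = c ^ 2) : ∃ g k, Fermat42Four g k c := by
  obtain ⟨e, rfl⟩ : Even d :=
    (Int.even_pow (n := 2)).mp ⟨r * s, by linear_combination -h⟩ |>.1
  wlog hr2 : Even r generalizing r s
  · have hs2 : Even s := by
      refine (Int.even_mul.mp ⟨e * e, ?_⟩).resolve_left hr2
      apply mul_left_cancel₀ (two_ne_zero (α := ℤ))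
      linear_combination h
    exact this hs hr hrs.symm (by linear_combination hc) (by linear_combination h) hs2
  obtain ⟨r', rfl⟩ := hr2
  have hr' : IsCoprime r' s := by
    rw [← two_mul] at hrs
    exact hrs.of_mul_left_right
  obtain ⟨g, rfl⟩ := Int.exists_sq_of_isCoprime_of_pos hr' (c := e)
    (by apply mul_left_cancel₀ (four_ne_zero (α := ℤ)); linear_combination h) (by linarith)
  obtain ⟨k, rfl⟩ := Int.exists_sq_of_isCoprime_of_pos hr'.symm (c := e)
    (by apply mul_left_cancel₀ (four_ne_zero (α := ℤ)); linear_combination h) hs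
  refine ⟨k, g, ?_, ?_, by linear_combination hc⟩
  · rintro rfl
    simp at hs
  · rintro rfl
    simp at hr

theorem exists_natAbs_lt_of_not_isCoprime (h : Fermat42Four x y z) (hxy : ¬IsCoprime x y) :
    ∃ x' y' z', Fermat42Four x' y' z' ∧ z'.natAbs < z.natAbs := by
  obtain ⟨p, hp, hpx, hpy⟩ :=
    Nat.Prime.not_coprime_iff_dvd.mp (mt Int.isCoprime_iff_gcd_eq_one.mpr hxy)
  obtain ⟨x', rfl⟩ := Int.natCast_dvd.mpr hpx
  obtain ⟨y', rfl⟩ := Int.natCast_dvd.mpr hpy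
  obtain ⟨z', rfl⟩ : (p : ℤ) ^ 2 ∣ z := by
    rw [← Int.pow_dvd_pow_iff two_ne_zero, ← h.2.2]
    exact ⟨x' ^ 4 + 4 * y' ^ 4, by ring⟩
  have hp0 : (p : ℤ) ≠ 0 := Int.natCast_ne_zero.mpr hp.ne_zero
  refine ⟨x', y', z', ⟨right_ne_zero_of_mul h.1, right_ne_zero_of_mul h.2.1, ?_⟩, ?_⟩
  · apply mul_left_cancel₀ (pow_ne_zero 4 hp0)
    linear_combination h.2.2
  · have hz' : z' ≠ 0 := right_ne_zero_of_mul h.ne_zero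
    have hp1 : (1 : ℤ) < (p ^ 2) ^ 2 :=
      one_lt_pow₀ (one_lt_pow₀ (mod_cast hp.one_lt) two_ne_zero) two_ne_zero
    rw [Int.natAbs_lt_iff_sq_lt]
    calc z' ^ 2 < (p ^ 2) ^ 2 * z' ^ 2 := lt_mul_left (by positivity) hp1
      _ = (p ^ 2 * z') ^ 2 := by ring

theorem exists_natAbs_lt_of_even (h : Fermat42Four x y z) (hx : Even x) :
    ∃ x' y' z', Fermat42Four x' y' z' ∧ z'.natAbs < z.natAbs := by
  obtain ⟨x', rfl⟩ := hx
  obtain ⟨z', rfl⟩ : Even z :=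
    (Int.even_pow (n := 2)).mp ⟨8 * x' ^ 4 + 2 * y ^ 4, by linear_combination -h.2.2⟩ |>.1
  refine ⟨y, x', z', ⟨h.2.1, by simpa [← two_mul] using h.1, ?_⟩, ?_⟩
  · apply mul_left_cancel₀ (four_ne_zero (α := ℤ))
    linear_combination h.2.2
  · have hz' : z' ≠ 0 := by simpa [← two_mul] using h.ne_zero
    have : 0 < z' ^ 2 := by positivity
    rw [Int.natAbs_lt_iff_sq_lt]
    nlinarith

theorem exists_natAbs_lt_of_odd (h : Fermat42Four x y z) (hx : Odd x) (hxy : IsCoprime x y) :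
    ∃ x' y' z', Fermat42Four x' y' z' ∧ z'.natAbs < z.natAbs := by
  have ht : PythagoreanTriple (x ^ 2) (2 * y ^ 2) |z| := by
    delta PythagoreanTriple
    linear_combination h.2.2 - sq_abs z
  have hcop : Int.gcd (x ^ 2) (2 * y ^ 2) = 1 :=
    Int.isCoprime_iff_gcd_eq_one.mp
      ((Int.isCoprime_two_right.mpr hx).mul_right hxy.pow_right).pow_left
  obtain ⟨m, n, hx2, hy2, hz, hmn, -, hm⟩ :=
    ht.coprime_classification' hcop (Int.odd_iff.mp hx.pow) (abs_pos.mpr h.ne_zero)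
  have hmn' : IsCoprime m n := Int.isCoprime_iff_gcd_eq_one.mpr hmn
  have hmn_pos : 0 < m * n := by nlinarith [sq_pos_of_ne_zero h.2.1]
  have hm0 : 0 < m := lt_of_le_of_ne hm (by rintro rfl; simp at hmn_pos)
  have hn0 : 0 < n := pos_of_mul_pos_right hmn_pos hm
  obtain ⟨c, rfl⟩ := Int.exists_sq_of_isCoprime_of_pos hmn' (c := y) (by linarith) hm0
  obtain ⟨d, rfl⟩ := Int.exists_sq_of_isCoprime_of_pos hmn'.symm (c := y) (by linarith) hn0
  -- `x² = c⁴ - d⁴` is a second primitive triple; its parameters give `c² = r² + s²`, `2rs = d²`.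
  have ht' : PythagoreanTriple x (d ^ 2) (c ^ 2) := by
    delta PythagoreanTriple
    linear_combination hx2
  have hcop' : Int.gcd x (d ^ 2) = 1 := by
    apply Int.isCoprime_iff_gcd_eq_one.mp
    apply IsCoprime.of_mul_left_left (y := x)
    rw [← sq, hx2, show (c ^ 2) ^ 2 - (d ^ 2) ^ 2 = (c ^ 2) ^ 2 + -d ^ 2 * d ^ 2 by ring]
    exact hmn'.pow_left.add_mul_right_left _
  obtain ⟨r, s, -, hd, hc, hrs, -, hr⟩ :=
    ht'.coprime_classification' hcop' (Int.odd_iff.mp hx) hm0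
  have hrs_pos : 0 < r * s := by nlinarith
  have hr0 : 0 < r := lt_of_le_of_ne hr (by rintro rfl; simp at hrs_pos)
  obtain ⟨g, k, hf⟩ := exists_of_two_mul_eq_sq hr0 (pos_of_mul_pos_right hrs_pos hr)
    (Int.isCoprime_iff_gcd_eq_one.mpr hrs) (d := d) (by linear_combination -hd) hc.symm
  refine ⟨g, k, c, hf, ?_⟩
  rw [Int.natAbs_lt_iff_sq_lt, ← sq_abs z, hz]
  nlinarith

theorem exists_natAbs_lt (h : Fermat42Four x y z) :
    ∃ x' y' z', Fermat42Four x' y' z' ∧ z'.natAbs < z.natAbs := by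
  by_cases hxy : IsCoprime x y
  · rcases Int.even_or_odd x with hx | hx
    · exact h.exists_natAbs_lt_of_even hx
    · exact h.exists_natAbs_lt_of_odd hx hxy
  · exact h.exists_natAbs_lt_of_not_isCoprime hxy

theorem not_fermat42Four : ¬Fermat42Four x y z := by
  induction hz : z.natAbs using Nat.strong_induction_on generalizing x y z with
  | _ n ih =>
    intro h
    obtain ⟨x', y', z', h', hlt⟩ := h.exists_natAbs_lt
    exact ih _ (hz ▸ hlt) rfl h'

end Fermat42Four

namespace Rat

theorem not_isSquare_of_odd_padicValRat {p : ℕ} [Fact p.Prime] {q : ℚ}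
    (h : Odd (padicValRat p q)) : ¬IsSquare q := by
  rintro ⟨s, rfl⟩
  rcases eq_or_ne s 0 with rfl | hs
  · simp at h
  · rw [padicValRat.mul hs hs] at h
    exact Int.not_even_iff_odd.mpr h ⟨_, rfl⟩

theorem not_isSquare_eight_mul {q : ℚ} (hq : q ≠ 0) (h : Even (padicValRat 2 q)) :
    ¬IsSquare (8 * q) := by
  apply not_isSquare_of_odd_padicValRat (p := 2)
  rw [padicValRat.mul (by norm_num) hq, show (8 : ℚ) = ((2 : ℕ) : ℚ) ^ 3 by norm_num,
    padicValRat.pow _, padicValRat.self one_lt_two, add_comm]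
  exact h.add_odd ⟨1, by norm_num⟩

theorem even_padicValRat_two_four_mul_pow_four_add_one (u : ℚ) :
    Even (padicValRat 2 (4 * u ^ 4 + 1)) := by
  rcases eq_or_ne u 0 with rfl | hu
  · simp
  have hval : padicValRat 2 (4 * u ^ 4) = 2 + 4 * padicValRat 2 u := by
    rw [padicValRat.mul (by norm_num) (by positivity), show (4 : ℚ) = ((2 : ℕ) : ℚ) ^ 2 by norm_num,
      padicValRat.pow _, padicValRat.pow _, padicValRat.self one_lt_two]
    ring
  rw [padicValRat.add_eq_min (by positivity) (by positivity) one_ne_zero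
    (by rw [hval, padicValRat.one]; omega), hval, padicValRat.one]
  rcases min_choice (2 + 4 * padicValRat 2 u) 0 with h | h <;> rw [h]
  · exact ⟨1 + 2 * padicValRat 2 u, by ring⟩
  · exact Even.zero

theorem not_isSquare_four_mul_pow_four_add_one {u : ℚ} (hu : u ≠ 0) :
    ¬IsSquare (4 * u ^ 4 + 1) := by
  rintro ⟨s, hs⟩
  have hden : (u.den : ℚ) ≠ 0 := by positivity
  obtain ⟨k, hk⟩ : IsSquare (u.den ^ 4 + 4 * u.num ^ 4 : ℤ) := by
    rw [← isSquare_intCast_iff]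
    refine ⟨s * u.den ^ 2, ?_⟩
    push_cast
    rw [← num_div_den u] at hs
    field_simp at hs
    linear_combination hs
  exact Fermat42Four.not_fermat42Four
    ⟨Int.natCast_ne_zero.mpr u.den_nz, num_ne_zero.mpr hu, by rw [hk]; ring⟩

theorem two_mul_sq_ne_one (u : ℚ) : 2 * u ^ 2 ≠ 1 := by
  intro h
  exact (by norm_num : ¬IsSquare (2 : ℚ)) ⟨2 * u, by linear_combination -2 * h⟩

end Rat

theorem IsOfFinAddOrder.exists_add_self_eq_or {G : Type*} [AddMonoid G] {P : G}
    (hP : IsOfFinAddOrder P) :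
    (∃ Q, Q + Q = P) ∨
      ∃ R, R ≠ 0 ∧ R + R = 0 ∧ ((∃ Q, Q + Q = R) ∨ ∃ Q, Q + Q = P + R) := by
  have hn := addOrderOf_nsmul_eq_zero P
  obtain ⟨j, hj | hj⟩ := Nat.even_or_odd' (addOrderOf P)
  · have hj0 : 0 < j := by
      have := addOrderOf_pos_iff.mpr hP
      omega
    refine .inr ⟨j • P, fun h0 => ?_, by rw [← add_nsmul, ← two_mul, ← hj, hn], ?_⟩
    · have := addOrderOf_le_of_nsmul_eq_zero hj0 h0
      omega
    · obtain ⟨i, rfl | rfl⟩ := Nat.even_or_odd' j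
      · exact .inl ⟨i • P, by rw [← add_nsmul, two_mul]⟩
      · exact .inr ⟨(i + 1) • P, by rw [← add_nsmul, ← succ_nsmul']; ring_nf⟩
  · refine .inl ⟨(j + 1) • P, ?_⟩
    rw [← add_nsmul, show j + 1 + (j + 1) = addOrderOf P + 1 by omega, succ_nsmul', hn, add_zero]

namespace WeierstrassCurve.Affine

variable {F : Type*} [Field F]

/-- The curve `y² = x(x + a)(x + b)`. -/
def fullTwoTorsion (a b : F) : WeierstrassCurve.Affine F :=
  { a₁ := 0, a₂ := a + b, a₃ := 0, a₄ := a * b, a₆ := 0 }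

variable {a b : F}

theorem fullTwoTorsion_negY (x y : F) : (fullTwoTorsion a b).negY x y = -y := by
  simp [fullTwoTorsion]

theorem fullTwoTorsion_equation_iff {x y : F} :
    (fullTwoTorsion a b).Equation x y ↔ y ^ 2 = x * (x + a) * (x + b) := by
  rw [equation_iff]
  simp only [fullTwoTorsion]
  constructor <;> intro h <;> linear_combination h

namespace Point

variable [DecidableEq F]

theorem fullTwoTorsion_eq_root_of_add_self_eq_zero [NeZero (2 : F)] {x y : F}
    {h : (fullTwoTorsion a b).Nonsingular x y} (h2 : some _ _ h + some _ _ h = 0) :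
    y = 0 ∧ (x = 0 ∨ x = -a ∨ x = -b) := by
  rw [add_eq_zero_iff_eq_neg, neg_some, some.injEq, fullTwoTorsion_negY] at h2
  obtain rfl : y = 0 :=
    (mul_eq_zero.mp (by linear_combination h2.2 : (2 : F) * y = 0)).resolve_left two_ne_zero
  refine ⟨rfl, ?_⟩
  have he := fullTwoTorsion_equation_iff.mp h.1
  rcases mul_eq_zero.mp (by linear_combination -he : x * (x + a) * (x + b) = 0) with h' | h'
  · rcases mul_eq_zero.mp h' with h'' | h''
    · exact .inl h''
    · exact .inr (.inl (eq_neg_of_add_eq_zero_left h''))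
  · exact .inr (.inr (eq_neg_of_add_eq_zero_left h'))

theorem fullTwoTorsion_isSquare_of_add_self_eq {x y : F}
    {h : (fullTwoTorsion a b).Nonsingular x y} {T : (fullTwoTorsion a b).Point}
    (hT : T + T = some _ _ h) : IsSquare x ∧ IsSquare (x + a) ∧ IsSquare (x + b) := by
  rcases T with _ | ⟨t, s, hT'⟩
  · exact absurd hT.symm (some_ne_zero h)
  have hs : s ≠ -s := by
    intro hs
    rw [add_self_of_Y_eq (by rwa [fullTwoTorsion_negY])] at hT
    exact some_ne_zero h hT.symm
  have hs0 : s ≠ 0 := by contrapose! hs; simp [hs]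
  have h2 : (2 : F) ≠ 0 := by contrapose! hs; linear_combination s * hs
  rw [add_self_of_Y_ne (by rwa [fullTwoTorsion_negY]), some.injEq] at hT
  have hx : x = ((3 * t ^ 2 + 2 * (a + b) * t + a * b) / (2 * s)) ^ 2 - (a + b) - 2 * t := by
    rw [← hT.1, slope_of_Y_ne rfl (by rwa [fullTwoTorsion_negY])]
    simp [fullTwoTorsion]
    ring
  have he := fullTwoTorsion_equation_iff.mp hT'.1
  refine ⟨⟨(t ^ 2 - a * b) / (2 * s), ?_⟩, ⟨(t ^ 2 + 2 * a * t + a * b) / (2 * s), ?_⟩,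
    ⟨(t ^ 2 + 2 * b * t + a * b) / (2 * s), ?_⟩⟩ <;> rw [hx] <;> field_simp
  · linear_combination (-4 * (a + b + 2 * t)) * he
  · linear_combination (-4 * (b + 2 * t)) * he
  · linear_combination (-4 * (a + 2 * t)) * he

end Point

end WeierstrassCurve.Affine

namespace curveE

open WeierstrassCurve.Affine WeierstrassCurve.Affine.Point

theorem nonsingular_P {u : ℚ} (hu : u ≠ 0) :
    (curveE u).Nonsingular (-4 * (4 * u ^ 4 + 1)) (16 * u * (4 * u ^ 4 + 1)) := by
  rw [nonsingular_iff, equation_iff]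
  refine ⟨by simp only [curveE]; ring, .inr ?_⟩
  simp only [curveE]
  have h4 : 0 < 4 * u ^ 4 + 1 := by positivity
  intro h
  exact mul_ne_zero hu h4.ne' (by linear_combination h / 32)

theorem not_add_self_eq_P {u : ℚ} (hu : u ≠ 0) (Q : (curveE u).Point) :
    Q + Q ≠ some _ _ (nonsingular_P hu) := by
  intro hQ
  have := (fullTwoTorsion_isSquare_of_add_self_eq hQ).1.nonneg
  nlinarith [pow_nonneg (sq_nonneg u) 2]

theorem exists_eq_some_of_two_torsion {u : ℚ} {R : (curveE u).Point} (hR0 : R ≠ 0)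
    (hR2 : R + R = 0) : ∃ r h, R = some r 0 h ∧
      (r = 0 ∨ r = -(32 * u ^ 4 + 8) ∨ r = -(16 * u ^ 4 - 16 * u ^ 2 + 4)) := by
  rcases R with _ | ⟨r, y, h⟩
  · exact absurd rfl hR0
  obtain ⟨rfl, hr⟩ := fullTwoTorsion_eq_root_of_add_self_eq_zero hR2
  exact ⟨r, h, rfl, hr⟩

theorem not_add_self_eq_of_two_torsion {u : ℚ} {R : (curveE u).Point} (hR0 : R ≠ 0)
    (hR2 : R + R = 0) (Q : (curveE u).Point) : Q + Q ≠ R := by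
  obtain ⟨r, h, rfl, hr⟩ := exists_eq_some_of_two_torsion hR0 hR2
  intro hQ
  obtain ⟨hsq, hsqa, -⟩ := fullTwoTorsion_isSquare_of_add_self_eq hQ
  rcases hr with rfl | rfl | rfl
  · rw [zero_add, show (32 * u ^ 4 + 8 : ℚ) = 8 * (4 * u ^ 4 + 1) by ring] at hsqa
    exact Rat.not_isSquare_eight_mul (by positivity)
      (Rat.even_padicValRat_two_four_mul_pow_four_add_one u) hsqa
  · have := hsq.nonneg
    nlinarith [pow_nonneg (sq_nonneg u) 2]
  · have h2u : 2 * u ^ 2 - 1 ≠ 0 := sub_ne_zero.mpr (Rat.two_mul_sq_ne_one u)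
    have := hsq.nonneg
    nlinarith [sq_pos_of_ne_zero h2u]

theorem not_add_self_eq_P_add_two_torsion {u : ℚ} (hu : u ≠ 0) {R : (curveE u).Point}
    (hR0 : R ≠ 0) (hR2 : R + R = 0) (Q : (curveE u).Point) :
    Q + Q ≠ some _ _ (nonsingular_P hu) + R := by
  obtain ⟨r, h, rfl, hr⟩ := exists_eq_some_of_two_torsion hR0 hR2
  have h4 : 0 < 4 * u ^ 4 + 1 := by positivity
  have hu2 : 0 < u ^ 2 := by positivity
  have h2u : 2 * u ^ 2 - 1 ≠ 0 := sub_ne_zero.mpr (Rat.two_mul_sq_ne_one u)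
  have hx : -4 * (4 * u ^ 4 + 1) ≠ r := by rcases hr with rfl | rfl | rfl <;> nlinarith
  rw [add_of_X_ne hx]
  intro hQ
  obtain ⟨⟨s, hs⟩, ⟨sa, hsa⟩, -⟩ := fullTwoTorsion_isSquare_of_add_self_eq hQ
  rw [slope_of_X_ne hx] at hs hsa
  simp only [addX, curveE] at hs hsa
  rcases hr with rfl | rfl | rfl
  · have hs' : s * s = -8 * (2 * u ^ 2 - 1) ^ 2 := by rw [← hs]; field_simp; ring
    nlinarith [mul_self_nonneg s, sq_pos_of_ne_zero h2u]
  · have hs' : sa * sa = 8 * (2 * u ^ 2 + 1) ^ 2 := by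
      rw [← hsa, show -4 * (4 * u ^ 4 + 1) - -(32 * u ^ 4 + 8) = 4 * (4 * u ^ 4 + 1) by ring]
      field_simp
      ring
    exact Rat.not_isSquare_eight_mul (by positivity)
      ⟨_, by rw [padicValRat.pow, Nat.cast_ofNat, two_mul]⟩ ⟨sa, hs'.symm⟩
  · have hs' : (s * u) ^ 2 = (4 * u ^ 4 + 1) * (2 * u ^ 2 - 1) ^ 2 := by
      rw [mul_pow, sq s, ← hs,
        show -4 * (4 * u ^ 4 + 1) - -(16 * u ^ 4 - 16 * u ^ 2 + 4) = -16 * u ^ 2 by ring]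
      field_simp
      ring
    refine Rat.not_isSquare_four_mul_pow_four_add_one hu ⟨s * u / (2 * u ^ 2 - 1), ?_⟩
    rw [← sq, div_pow, hs', mul_div_assoc, div_self (pow_ne_zero 2 h2u), mul_one]

end curveE

/-- For every nonzero rational `u`, the point `P = (-4(4u⁴+1), 16u(4u⁴+1))` is a (nonsingular)
rational point on `Y² = X(X + 32u⁴ + 8)(X + 16u⁴ - 16u² + 4)` of infinite order. -/
theorem point_P_on_curveE_infinite_order (u : ℚ) (hu : u ≠ 0) :
    ∃ h : (curveE u).Nonsingular (-4 * (4 * u ^ 4 + 1)) (16 * u * (4 * u ^ 4 + 1)),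
      ¬ IsOfFinAddOrder (WeierstrassCurve.Affine.Point.some _ _ h) := by
  refine ⟨curveE.nonsingular_P hu, fun hP => ?_⟩
  rcases hP.exists_add_self_eq_or with ⟨Q, hQ⟩ | ⟨R, hR0, hR2, ⟨Q, hQ⟩ | ⟨Q, hQ⟩⟩
  · exact curveE.not_add_self_eq_P hu Q hQ
  · exact curveE.not_add_self_eq_of_two_torsion hR0 hR2 Q hQ
  · exact curveE.not_add_self_eq_P_add_two_torsion hu hR0 hR2 Q hQ
end

section
/- For every nonzero rational number u such that 4u⁴ ≠ 3, 12u⁴ ≠ 1, and the three numbers 1, (4u⁴+1)/(4u²) and (4u⁴+1)(256u¹⁶+4352u¹²-1952u⁸+272u⁴+1)/(4u²(4u⁴-3)²(12u⁴-1)²) are pairwise distinct, the set {1, (4u⁴+1)/(4u²), (4u⁴+1)(256u¹⁶+4352u¹²-1952u⁸+272u⁴+1)/(4u²(4u⁴-3)²(12u⁴-1)²)} is a strong rational D(-1)-triple. -/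
/-- `a`, `b`, `c` form a strong rational `D(-1)`-triple: three distinct nonzero rationals
such that `a² - 1`, `b² - 1`, `c² - 1`, `ab - 1`, `ac - 1`, `bc - 1` are rational squares. -/
def IsStrongDminus1Triple (a b c : ℚ) : Prop :=
  a ≠ b ∧ a ≠ c ∧ b ≠ c ∧ a ≠ 0 ∧ b ≠ 0 ∧ c ≠ 0 ∧
    IsSquare (a ^ 2 - 1) ∧ IsSquare (b ^ 2 - 1) ∧ IsSquare (c ^ 2 - 1) ∧
    IsSquare (a * b - 1) ∧ IsSquare (a * c - 1) ∧ IsSquare (b * c - 1)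

/-!
Each of the six quantities is the square of an explicit rational function of `u`, so the
square conditions are identities of rational functions; `c ≠ 0` because the degree-16 factor
of its numerator is a sum of squares plus one.
-/

section Identities

variable {K : Type*} [Field K] [CharZero K]

def tripleB (u : K) : K := (4 * u ^ 4 + 1) / (4 * u ^ 2)

def tripleC (u : K) : K :=
  (4 * u ^ 4 + 1) * (256 * u ^ 16 + 4352 * u ^ 12 - 1952 * u ^ 8 + 272 * u ^ 4 + 1) /
    (4 * u ^ 2 * (4 * u ^ 4 - 3) ^ 2 * (12 * u ^ 4 - 1) ^ 2)

theorem tripleB_sq_sub_one {u : K} (hu : u ≠ 0) :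
    tripleB u ^ 2 - 1 = ((4 * u ^ 4 - 1) / (4 * u ^ 2)) ^ 2 := by
  unfold tripleB
  field_simp
  ring

theorem tripleB_sub_one {u : K} (hu : u ≠ 0) :
    tripleB u - 1 = ((2 * u ^ 2 - 1) / (2 * u)) ^ 2 := by
  unfold tripleB
  field_simp
  ring

theorem tripleC_sq_sub_one {u : K} (hu : u ≠ 0) (h3 : 4 * u ^ 4 - 3 ≠ 0)
    (h12 : 12 * u ^ 4 - 1 ≠ 0) :
    tripleC u ^ 2 - 1 =
      ((-1024 * u ^ 20 + 23808 * u ^ 16 - 10368 * u ^ 12 + 2592 * u ^ 8 - 372 * u ^ 4 + 1) /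
        (4 * u ^ 2 * (4 * u ^ 4 - 3) ^ 2 * (12 * u ^ 4 - 1) ^ 2)) ^ 2 := by
  unfold tripleC
  rw [div_pow, div_pow, div_sub_one (by simp [*]), div_eq_div_iff (by simp [*]) (by simp [*])]
  ring

theorem tripleC_sub_one {u : K} (hu : u ≠ 0) (h3 : 4 * u ^ 4 - 3 ≠ 0)
    (h12 : 12 * u ^ 4 - 1 ≠ 0) :
    tripleC u - 1 =
      ((-32 * u ^ 10 + 144 * u ^ 8 + 48 * u ^ 6 - 24 * u ^ 4 - 18 * u ^ 2 + 1) /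
        (2 * u * (4 * u ^ 4 - 3) * (12 * u ^ 4 - 1))) ^ 2 := by
  unfold tripleC
  rw [div_pow, div_sub_one (by simp [*]), div_eq_div_iff (by simp [*]) (by simp [*])]
  ring

theorem tripleB_mul_tripleC_sub_one {u : K} (hu : u ≠ 0) (h3 : 4 * u ^ 4 - 3 ≠ 0)
    (h12 : 12 * u ^ 4 - 1 ≠ 0) :
    tripleB u * tripleC u - 1 =
      ((-64 * u ^ 12 - 272 * u ^ 8 + 68 * u ^ 4 + 1) /
        (4 * u ^ 2 * (4 * u ^ 4 - 3) * (12 * u ^ 4 - 1))) ^ 2 := by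
  unfold tripleB tripleC
  rw [div_mul_div_comm, div_pow, div_sub_one (by simp [*]),
    div_eq_div_iff (by simp [*]) (by simp [*])]
  ring

end Identities

section Positivity

variable {K : Type*} [Field K] [LinearOrder K] [IsStrictOrderedRing K]

theorem tripleB_pos {u : K} (hu : u ≠ 0) : 0 < tripleB u := by
  unfold tripleB
  positivity

theorem tripleC_pos {u : K} (hu : u ≠ 0) (h3 : 4 * u ^ 4 - 3 ≠ 0)
    (h12 : 12 * u ^ 4 - 1 ≠ 0) : 0 < tripleC u := by
  have hnum : 0 < 256 * u ^ 16 + 4352 * u ^ 12 - 1952 * u ^ 8 + 272 * u ^ 4 + 1 := by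
    have : 256 * u ^ 16 + 4352 * u ^ 12 - 1952 * u ^ 8 + 272 * u ^ 4 + 1 =
        (16 * u ^ 8) ^ 2 + 272 * (u ^ 2 * (4 * u ^ 4 - 1)) ^ 2 + 224 * (u ^ 4) ^ 2 + 1 := by
      ring
    rw [this]
    positivity
  unfold tripleC
  positivity

end Positivity

/-- The family of strong rational `D(-1)`-triples coming from the point `2P`. -/
theorem strong_triple_from_2P (u : ℚ) (hu : u ≠ 0)
    (h3 : 4 * u ^ 4 ≠ 3) (h12 : 12 * u ^ 4 ≠ 1)
    (b c : ℚ) (hb : b = (4 * u ^ 4 + 1) / (4 * u ^ 2))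
    (hc : c = (4 * u ^ 4 + 1) *
      (256 * u ^ 16 + 4352 * u ^ 12 - 1952 * u ^ 8 + 272 * u ^ 4 + 1) /
      (4 * u ^ 2 * (4 * u ^ 4 - 3) ^ 2 * (12 * u ^ 4 - 1) ^ 2))
    (hne1 : (1 : ℚ) ≠ b) (hne2 : (1 : ℚ) ≠ c) (hne3 : b ≠ c) :
    IsStrongDminus1Triple 1 b c := by
  obtain rfl : b = tripleB u := hb
  obtain rfl : c = tripleC u := hc
  replace h3 := sub_ne_zero.mpr h3
  replace h12 := sub_ne_zero.mpr h12
  refine ⟨hne1, hne2, hne3, one_ne_zero, (tripleB_pos hu).ne', (tripleC_pos hu h3 h12).ne',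
    ⟨0, by norm_num⟩, ?_, ?_, ?_, ?_, ?_⟩
  · rw [tripleB_sq_sub_one hu]; exact IsSquare.sq _
  · rw [tripleC_sq_sub_one hu h3 h12]; exact IsSquare.sq _
  · rw [one_mul, tripleB_sub_one hu]; exact IsSquare.sq _
  · rw [one_mul, tripleC_sub_one hu h3 h12]; exact IsSquare.sq _
  · rw [tripleB_mul_tripleC_sub_one hu h3 h12]; exact IsSquare.sq _
end

section
/- For every nonzero rational number w such that the denominators do not vanish and the three elements are pairwise distinct, the set {1, b, c} is a strong rational D(-1)-triple, where b = (w⁸+56w⁶+1240w⁴+10976w²+38416)/(16w²(14+w²)²) and c = (w⁸+40w⁶+4888w⁴+7840w²+38416)(w⁸-4w⁷+24w⁶-40w⁵+152w⁴+16w³+608w²+672w+784)(w⁸+4w⁷+24w⁶+40w⁵+152w⁴-16w³+608w²-672w+784)/(16w²(w⁶+18w⁴-100w²-392)²(3w⁴+28w²+140)²). -/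
section QuarticParam

variable {K : Type*} [Field K]

def quarticParam (t : K) : K := (4 * t ^ 4 + 1) / (2 * t) ^ 2

theorem quarticParam_div (p : K) {q : K} (hq : q ≠ 0) :
    quarticParam (p / q) = (4 * p ^ 4 + q ^ 4) / (2 * p * q) ^ 2 := by
  unfold quarticParam; field_simp

variable [NeZero (2 : K)]

theorem quarticParam_sub_one {t : K} (ht : t ≠ 0) :
    quarticParam t - 1 = ((2 * t ^ 2 - 1) / (2 * t)) ^ 2 := by
  rw [quarticParam, div_pow, div_sub_one (pow_ne_zero _ (mul_ne_zero two_ne_zero ht))]; ring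

theorem quarticParam_add_one {t : K} (ht : t ≠ 0) :
    quarticParam t + 1 = ((2 * t ^ 2 + 1) / (2 * t)) ^ 2 := by
  rw [quarticParam, div_pow, div_add_one (pow_ne_zero _ (mul_ne_zero two_ne_zero ht))]; ring

theorem quarticParam_div_mul_quarticParam_div_sub_one {p q r s : K} (hp : p ≠ 0) (hq : q ≠ 0)
    (hr : r ≠ 0) (hs : s ≠ 0) :
    quarticParam (p / q) * quarticParam (r / s) - 1 =
      ((4 * p ^ 4 + q ^ 4) * (4 * r ^ 4 + s ^ 4) - (4 * p * q * r * s) ^ 2) /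
        (4 * p * q * r * s) ^ 2 := by
  have h2pq : 2 * p * q ≠ 0 := mul_ne_zero (mul_ne_zero two_ne_zero hp) hq
  have h2rs : 2 * r * s ≠ 0 := mul_ne_zero (mul_ne_zero two_ne_zero hr) hs
  rw [quarticParam_div _ hq, quarticParam_div _ hs, div_mul_div_comm, ← mul_pow,
    div_sub_one (pow_ne_zero _ (mul_ne_zero h2pq h2rs))]
  ring

end QuarticParam

theorem isStrongDminus1Triple_one_of_isSquare {b c : ℚ} (h1b : 1 ≠ b) (h1c : 1 ≠ c) (hbc : b ≠ c)
    (hb_sub : IsSquare (b - 1)) (hb_add : IsSquare (b + 1)) (hc_sub : IsSquare (c - 1))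
    (hc_add : IsSquare (c + 1)) (hbc_sub : IsSquare (b * c - 1)) :
    IsStrongDminus1Triple 1 b c := by
  have ne_zero_of_isSquare_sub_one {x : ℚ} (hx : IsSquare (x - 1)) : x ≠ 0 := by
    linarith [hx.nonneg]
  have sq_sub_one (x : ℚ) : x ^ 2 - 1 = (x - 1) * (x + 1) := by ring
  refine ⟨h1b, h1c, hbc, one_ne_zero, ne_zero_of_isSquare_sub_one hb_sub,
    ne_zero_of_isSquare_sub_one hc_sub, ⟨0, by norm_num⟩,
    sq_sub_one b ▸ hb_sub.mul hb_add, sq_sub_one c ▸ hc_sub.mul hc_add, ?_, ?_, hbc_sub⟩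
  · rwa [one_mul]
  · rwa [one_mul]

theorem isStrongDminus1Triple_one_quarticParam_div {p q r s t : ℚ} (hp : p ≠ 0) (hq : q ≠ 0)
    (hr : r ≠ 0) (hs : s ≠ 0) (h1b : 1 ≠ quarticParam (p / q)) (h1c : 1 ≠ quarticParam (r / s))
    (hbc : quarticParam (p / q) ≠ quarticParam (r / s))
    (ht : (4 * p ^ 4 + q ^ 4) * (4 * r ^ 4 + s ^ 4) - (4 * p * q * r * s) ^ 2 = t ^ 2) :
    IsStrongDminus1Triple 1 (quarticParam (p / q)) (quarticParam (r / s)) := by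
  have hu : p / q ≠ 0 := div_ne_zero hp hq
  have hv : r / s ≠ 0 := div_ne_zero hr hs
  refine isStrongDminus1Triple_one_of_isSquare h1b h1c hbc
    ⟨_, (quarticParam_sub_one hu).trans (sq _)⟩ ⟨_, (quarticParam_add_one hu).trans (sq _)⟩
    ⟨_, (quarticParam_sub_one hv).trans (sq _)⟩ ⟨_, (quarticParam_add_one hv).trans (sq _)⟩
    ⟨t / (4 * p * q * r * s), ?_⟩
  rw [quarticParam_div_mul_quarticParam_div_sub_one hp hq hr hs, ht, ← div_pow, sq]

theorem strong_triple_rank_two_family_general (w : ℚ) (hw : w ≠ 0)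
    (hd1 : w ^ 6 + 18 * w ^ 4 - 100 * w ^ 2 - 392 ≠ 0)
    (b c : ℚ)
    (hb : b = (w ^ 8 + 56 * w ^ 6 + 1240 * w ^ 4 + 10976 * w ^ 2 + 38416) /
      (16 * w ^ 2 * (14 + w ^ 2) ^ 2))
    (hc : c = (w ^ 8 + 40 * w ^ 6 + 4888 * w ^ 4 + 7840 * w ^ 2 + 38416) *
      (w ^ 8 - 4 * w ^ 7 + 24 * w ^ 6 - 40 * w ^ 5 + 152 * w ^ 4 + 16 * w ^ 3 +
        608 * w ^ 2 + 672 * w + 784) *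
      (w ^ 8 + 4 * w ^ 7 + 24 * w ^ 6 + 40 * w ^ 5 + 152 * w ^ 4 - 16 * w ^ 3 +
        608 * w ^ 2 - 672 * w + 784) /
      (16 * w ^ 2 * (w ^ 6 + 18 * w ^ 4 - 100 * w ^ 2 - 392) ^ 2 *
        (3 * w ^ 4 + 28 * w ^ 2 + 140) ^ 2))
    (hne1 : (1 : ℚ) ≠ b) (hne2 : (1 : ℚ) ≠ c) (hne3 : b ≠ c) :
    IsStrongDminus1Triple 1 b c := by
  have hs : 4 * w * (3 * w ^ 4 + 28 * w ^ 2 + 140) ≠ 0 := by positivity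
  obtain rfl : b = quarticParam ((14 + w ^ 2) / (4 * w)) := by
    rw [hb, quarticParam_div _ (by positivity), div_eq_div_iff (by positivity) (by positivity)]
    ring
  obtain rfl : c = quarticParam ((w ^ 6 + 18 * w ^ 4 - 100 * w ^ 2 - 392) /
      (4 * w * (3 * w ^ 4 + 28 * w ^ 2 + 140))) := by
    rw [hc, quarticParam_div _ hs, div_eq_div_iff (by simp [hw, hd1]; positivity)
      (by simp [hw, hd1]; positivity)]
    ring
  exact isStrongDminus1Triple_one_quarticParam_div (by positivity) (by positivity) hd1 hs
    hne1 hne2 hne3 (t := 4 * (w ^ 16 + 64 * w ^ 14 + 2800 * w ^ 12 + 60928 * w ^ 10 +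
      760160 * w ^ 8 + 4893696 * w ^ 6 + 14739200 * w ^ 4 + 19668992 * w ^ 2 + 30118144)) (by ring)

/-- The family of strong rational `D(-1)`-triples obtained by the substitution
`u = (14 + w²)/(4w)` in the parametrization `b = (4u⁴ + 1)/(4u²)`. -/
theorem strong_triple_rank_two_family (w : ℚ) (hw : w ≠ 0)
    (hd0 : 14 + w ^ 2 ≠ 0)
    (hd1 : w ^ 6 + 18 * w ^ 4 - 100 * w ^ 2 - 392 ≠ 0)
    (hd2 : 3 * w ^ 4 + 28 * w ^ 2 + 140 ≠ 0)
    (b c : ℚ)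
    (hb : b = (w ^ 8 + 56 * w ^ 6 + 1240 * w ^ 4 + 10976 * w ^ 2 + 38416) /
      (16 * w ^ 2 * (14 + w ^ 2) ^ 2))
    (hc : c = (w ^ 8 + 40 * w ^ 6 + 4888 * w ^ 4 + 7840 * w ^ 2 + 38416) *
      (w ^ 8 - 4 * w ^ 7 + 24 * w ^ 6 - 40 * w ^ 5 + 152 * w ^ 4 + 16 * w ^ 3 +
        608 * w ^ 2 + 672 * w + 784) *
      (w ^ 8 + 4 * w ^ 7 + 24 * w ^ 6 + 40 * w ^ 5 + 152 * w ^ 4 - 16 * w ^ 3 +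
        608 * w ^ 2 - 672 * w + 784) /
      (16 * w ^ 2 * (w ^ 6 + 18 * w ^ 4 - 100 * w ^ 2 - 392) ^ 2 *
        (3 * w ^ 4 + 28 * w ^ 2 + 140) ^ 2))
    (hne1 : (1 : ℚ) ≠ b) (hne2 : (1 : ℚ) ≠ c) (hne3 : b ≠ c) :
    IsStrongDminus1Triple 1 b c :=
  strong_triple_rank_two_family_general w hw hd1 b c hb hc hne1 hne2 hne3
end

section
/- For every rational number w ≠ 0 with 2u² + 1 ≠ 0 where u = (14+w²)/(4w), the number 4u² - 14 = ((w² - 14)/(2w))² is a square of a rational number; consequently, setting x = 8(2u² + 1), there is a rational y such that (x, y) is a point on the curve y² = x(x² - 24x + 32xu² - 96xu⁴ + 16(2u²+1)⁴). -/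
/-- For `u = (14 + w²)/(4w)` with `w ≠ 0` and `2u² + 1 ≠ 0`, the number `4u² - 14` equals
`((w² - 14)/(2w))²`, hence `x = 8(2u² + 1)` is the `x`-coordinate of a rational point on the
`2`-isogenous curve `y² = x(x² - 24x + 32xu² - 96xu⁴ + 16(2u² + 1)⁴)`. -/
theorem isogenous_curve_point (w : ℚ) (hw : w ≠ 0) (u : ℚ)
    (hu : u = (14 + w ^ 2) / (4 * w)) (h2u : 2 * u ^ 2 + 1 ≠ 0)
    (x : ℚ) (hx : x = 8 * (2 * u ^ 2 + 1)) :
    4 * u ^ 2 - 14 = ((w ^ 2 - 14) / (2 * w)) ^ 2 ∧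
    ∃ y : ℚ, y ^ 2 = x * (x ^ 2 - 24 * x + 32 * x * u ^ 2 - 96 * x * u ^ 4 +
      16 * (2 * u ^ 2 + 1) ^ 4) := by
  subst hu hx
  constructor
  · field_simp
    ring
  · refine ⟨(w ^ 10 + 42 * w ^ 8 + 328 * w ^ 6 - 4592 * w ^ 4 - 115248 * w ^ 2 - 537824) /
      (16 * w ^ 5), ?_⟩
    field_simp
    ring
end

section
/- The point G₁ = (-20740, 497760) is a rational point on the elliptic curve y² = x³ + 61644x² + 836402720x, and G₁ has infinite order in the group of rational points of this curve. -/
/-!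
Write the curve as `y² = x (x² + a x + b)`. Sending `(x, y)` to the class of `x` in `ℚˣ / ℚˣ²`,
and `(0, 0)` to the class of `b`, is a homomorphism (the 2-descent map): the `x`-coordinates of
three collinear points multiply to a square, by Vieta applied to the line through them. Composing
it with the parity of `v₂`, of `v₁₇` and of the sign gives homomorphisms `E(ℚ) → ℤ/2`, all of
which vanish on `2 E(ℚ)`. Since `v₂` or the sign is odd at each of the three points of order 2,
none of them is a double, so `E(ℚ)` has no point of order 4. The sum `v₂ + v₁₇` vanishes on the
2-torsion but is odd at `G₁ = (-2² · 5 · 17 · 61, _)`, and a homomorphism to `ℤ/2` killing the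
2-torsion of a group without points of order 4 kills every torsion point.
-/

/-- The elliptic curve `y² = x³ + 61644x² + 836402720x` over `ℚ`. -/
noncomputable def specializedCurve6 : WeierstrassCurve.Affine ℚ :=
  { a₁ := 0, a₂ := 61644, a₃ := 0, a₄ := 836402720, a₆ := 0 }

section Descent

variable {K : Type*} [Field K] [DecidableEq K] {χ : K → ZMod 2}

def descentValue (χ : K → ZMod 2) (b x : K) : ZMod 2 :=
  if x = 0 then χ b else χ x

variable (hχ : ∀ a b : K, a ≠ 0 → b ≠ 0 → χ (a * b) = χ a + χ b)
include hχ

omit [DecidableEq K] in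
lemma apply_sq_eq_zero {a : K} (ha : a ≠ 0) : χ (a ^ 2) = 0 := by
  rw [sq, hχ a a ha ha, CharTwo.add_self_eq_zero]

lemma descentValue_zero_add_add {b x₂ x₃ : K} (h : x₂ * x₃ = b) (hb : b ≠ 0) :
    descentValue χ b 0 + descentValue χ b x₂ + descentValue χ b x₃ = 0 := by
  have hx₂ : x₂ ≠ 0 := left_ne_zero_of_mul (h ▸ hb)
  have hx₃ : x₃ ≠ 0 := right_ne_zero_of_mul (h ▸ hb)
  rw [descentValue, descentValue, descentValue, if_pos rfl, if_neg hx₂, if_neg hx₃, add_assoc,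
    ← hχ _ _ hx₂ hx₃, h, CharTwo.add_self_eq_zero]

/-- `x₁, x₂, x₃` are the roots of `x³ + a x² + b x - (L x + ν)²`. -/
lemma descentValue_add_add_eq_zero {b L ν x₁ x₂ x₃ : K} (hb : b ≠ 0)
    (hsum : x₁ * x₂ + x₁ * x₃ + x₂ * x₃ = b - 2 * L * ν) (hprod : x₁ * x₂ * x₃ = ν ^ 2) :
    descentValue χ b x₁ + descentValue χ b x₂ + descentValue χ b x₃ = 0 := by
  by_cases h0 : x₁ * x₂ * x₃ = 0
  · have hν : ν = 0 := pow_eq_zero_iff two_ne_zero |>.mp (hprod ▸ h0)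
    rw [hν, mul_zero, sub_zero] at hsum
    rcases mul_eq_zero.mp h0 with h12 | rfl
    · rcases mul_eq_zero.mp h12 with rfl | rfl
      · exact descentValue_zero_add_add hχ (by linear_combination hsum) hb
      · rw [add_comm (descentValue χ b x₁)]
        exact descentValue_zero_add_add hχ (by linear_combination hsum) hb
    · rw [← add_rotate]
      exact descentValue_zero_add_add hχ (by linear_combination hsum) hb
  · have hx₁ : x₁ ≠ 0 := fun h => h0 (by rw [h]; ring)
    have hx₂ : x₂ ≠ 0 := fun h => h0 (by rw [h]; ring)
    have hx₃ : x₃ ≠ 0 := fun h => h0 (by rw [h]; ring)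
    have hν : ν ≠ 0 := fun h => h0 (by rw [hprod, h]; ring)
    rw [descentValue, descentValue, descentValue, if_neg hx₁, if_neg hx₂, if_neg hx₃,
      ← hχ _ _ hx₁ hx₂, ← hχ _ _ (mul_ne_zero hx₁ hx₂) hx₃, hprod, apply_sq_eq_zero hχ hν]

end Descent

namespace WeierstrassCurve.Affine

variable {K : Type*} [Field K] [DecidableEq K] (W : WeierstrassCurve.Affine K)

lemma vieta_addX (ha₁ : W.a₁ = 0) (ha₃ : W.a₃ = 0) (ha₆ : W.a₆ = 0) {x₁ x₂ y₁ y₂ : K}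
    (h₁ : W.Equation x₁ y₁) (h₂ : W.Equation x₂ y₂) (hxy : ¬(x₁ = x₂ ∧ y₁ = W.negY x₂ y₂)) :
    let L := W.slope x₁ x₂ y₁ y₂
    let x₃ := W.addX x₁ x₂ L
    x₁ * x₂ + x₁ * x₃ + x₂ * x₃ = W.a₄ - 2 * L * (y₁ - L * x₁) ∧
      x₁ * x₂ * x₃ = (y₁ - L * x₁) ^ 2 := by
  intro L x₃
  have h := addPolynomial_slope h₁ h₂ hxy
  rw [addPolynomial_eq, Cubic.prod_X_sub_C_eq, neg_inj, Cubic.toPoly_injective] at h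
  have hc := congrArg Cubic.c h
  have hd := congrArg Cubic.d h
  simp only [ha₁, ha₃, ha₆] at hc hd
  exact ⟨by linear_combination -hc, by linear_combination hd⟩

def twoDescent (χ : K → ZMod 2) : W.Point → ZMod 2
  | .zero => 0
  | .some x _ _ => descentValue χ W.a₄ x

variable {χ : K → ZMod 2} (hχ : ∀ a b : K, a ≠ 0 → b ≠ 0 → χ (a * b) = χ a + χ b)
  (ha₁ : W.a₁ = 0) (ha₃ : W.a₃ = 0) (ha₄ : W.a₄ ≠ 0) (ha₆ : W.a₆ = 0)

include hχ ha₁ ha₃ ha₄ ha₆ in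
lemma twoDescent_add (P Q : W.Point) :
    twoDescent W χ (P + Q) = twoDescent W χ P + twoDescent W χ Q := by
  rcases P with _ | ⟨x₁, y₁, h₁⟩
  · exact (zero_add _).symm
  rcases Q with _ | ⟨x₂, y₂, h₂⟩
  · exact (add_zero _).symm
  by_cases hxy : x₁ = x₂ ∧ y₁ = W.negY x₂ y₂
  · rw [Point.add_of_Y_eq hxy.1 hxy.2]
    show 0 = descentValue χ W.a₄ x₁ + descentValue χ W.a₄ x₂
    rw [hxy.1, CharTwo.add_self_eq_zero]
  · rw [Point.add_some hxy]
    obtain ⟨hsum, hprod⟩ := W.vieta_addX ha₁ ha₃ ha₆ h₁.1 h₂.1 hxy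
    have h := descentValue_add_add_eq_zero hχ ha₄ hsum hprod
    exact (eq_neg_of_add_eq_zero_right h).trans (CharTwo.neg_eq _)

def twoDescentHom : W.Point →+ ZMod 2 :=
  AddMonoidHom.mk' (twoDescent W χ) (twoDescent_add W hχ ha₁ ha₃ ha₄ ha₆)

end WeierstrassCurve.Affine

def padicParity (p : ℕ) (x : ℚ) : ZMod 2 := (padicValRat p x : ZMod 2)

lemma padicParity_mul (p : ℕ) [Fact p.Prime] {a b : ℚ} (ha : a ≠ 0) (hb : b ≠ 0) :
    padicParity p (a * b) = padicParity p a + padicParity p b := by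
  rw [padicParity, padicValRat.mul ha hb, Int.cast_add]
  rfl

lemma padicParity_eq {p : ℕ} [hp : Fact p.Prime] {x : ℚ} (k : ℕ) (a : ℤ)
    (hx : x = (p : ℚ) ^ k * a) (ha : ¬(p : ℤ) ∣ a) : padicParity p x = k := by
  subst hx
  have ha₀ : (a : ℚ) ≠ 0 := Int.cast_ne_zero.mpr (by rintro rfl; exact ha (dvd_zero _))
  have hp₀ : (p : ℚ) ≠ 0 := Nat.cast_ne_zero.mpr hp.out.ne_zero
  rw [padicParity, padicValRat.mul (pow_ne_zero _ hp₀) ha₀, padicValRat.pow,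
    padicValRat.self hp.out.one_lt, padicValRat.of_int, padicValInt.eq_zero_of_not_dvd ha]
  simp

def signParity {K : Type*} [Field K] [LinearOrder K] (x : K) : ZMod 2 := if x < 0 then 1 else 0

lemma signParity_mul {K : Type*} [Field K] [LinearOrder K] [IsStrictOrderedRing K] {a b : K}
    (ha : a ≠ 0) (hb : b ≠ 0) : signParity (a * b) = signParity a + signParity b := by
  rcases ha.lt_or_gt with ha | ha <;> rcases hb.lt_or_gt with hb | hb <;>
    simp [signParity, ha, hb, ha.not_gt, hb.not_gt, mul_neg_iff, CharTwo.add_self_eq_zero]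

lemma AddMonoidHom.apply_odd_nsmul {G : Type*} [AddCommGroup G] (ψ : G →+ ZMod 2) {m : ℕ}
    (hm : Odd m) (Q : G) : ψ (m • Q) = ψ Q := by
  rw [map_nsmul, nsmul_eq_mul, ZMod.natCast_eq_one_iff_odd.mpr hm, one_mul]

lemma AddMonoidHom.eq_zero_of_isOfFinAddOrder {G : Type*} [AddCommGroup G] (ψ : G →+ ZMod 2)
    (h₂ : ∀ T : G, 2 • T = 0 → ψ T = 0) (h₄ : ∀ Q : G, 4 • Q = 0 → 2 • Q = 0) {Q : G}
    (hQ : IsOfFinAddOrder Q) : ψ Q = 0 := by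
  obtain ⟨n, hn, hnQ⟩ := hQ.exists_nsmul_eq_zero
  induction n using Nat.strong_induction_on with
  | _ n ih =>
  obtain ⟨k, rfl | rfl⟩ := Nat.even_or_odd' n
  · obtain ⟨j, rfl | rfl⟩ := Nat.even_or_odd' k
    · have h : 2 • j • Q = 0 := h₄ _ (by rwa [smul_smul, show 4 * j = 2 * (2 * j) by ring])
      exact ih (2 * j) (by omega) (by omega) (by rwa [smul_smul] at h)
    · rw [← ψ.apply_odd_nsmul (odd_two_mul_add_one j)]
      exact h₂ _ (by rwa [smul_smul])
  · rw [← ψ.apply_odd_nsmul (odd_two_mul_add_one k), hnQ, map_zero]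

instance Nat.fact_prime_seventeen : Fact (Nat.Prime 17) := ⟨by norm_num⟩

namespace specializedCurve6

open WeierstrassCurve.Affine

lemma a₄_ne_zero : specializedCurve6.a₄ ≠ 0 := by norm_num [specializedCurve6]

noncomputable def descent {χ : ℚ → ZMod 2}
    (hχ : ∀ a b : ℚ, a ≠ 0 → b ≠ 0 → χ (a * b) = χ a + χ b) : specializedCurve6.Point →+ ZMod 2 :=
  specializedCurve6.twoDescentHom hχ rfl rfl a₄_ne_zero rfl

noncomputable def padicDescent (p : ℕ) [Fact p.Prime] : specializedCurve6.Point →+ ZMod 2 :=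
  descent fun _ _ => padicParity_mul p

noncomputable def signDescent : specializedCurve6.Point →+ ZMod 2 :=
  descent fun _ _ => signParity_mul

lemma padicDescent_some (p : ℕ) [Fact p.Prime] {x y : ℚ} (h : specializedCurve6.Nonsingular x y) :
    padicDescent p (.some x y h) = descentValue (padicParity p) 836402720 x :=
  rfl

lemma signDescent_some {x y : ℚ} (h : specializedCurve6.Nonsingular x y) :
    signDescent (.some x y h) = descentValue signParity 836402720 x :=
  rfl

lemma x_of_two_nsmul_eq_zero {x y : ℚ} {h : specializedCurve6.Nonsingular x y}
    (hT : 2 • Point.some x y h = 0) : x = 0 ∨ x = -20164 ∨ x = -41480 := by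
  have hy : y = specializedCurve6.negY x y := by
    by_contra hy
    rw [two_nsmul, Point.add_self_of_Y_ne hy] at hT
    exact Point.some_ne_zero _ hT
  have he := (equation_iff x y).mp h.1
  simp only [specializedCurve6, negY] at hy he
  have hy₀ : y = 0 := by linarith
  subst hy₀
  have hfac : x * (x + 20164) * (x + 41480) = 0 := by linear_combination -he
  simpa [or_assoc, add_eq_zero_iff_eq_neg] using hfac

lemma padicDescent_two_add_seventeen_eq_zero {T : specializedCurve6.Point} (hT : 2 • T = 0) :
    padicDescent 2 T + padicDescent 17 T = 0 := by
  rcases T with _ | ⟨x, y, h⟩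
  · rfl
  rw [padicDescent_some, padicDescent_some]
  rcases x_of_two_nsmul_eq_zero hT with rfl | rfl | rfl <;> norm_num [descentValue]
  · rw [padicParity_eq 5 26137585 (by norm_num) (by norm_num),
      padicParity_eq 1 49200160 (by norm_num) (by norm_num)]
    rfl
  · rw [padicParity_eq 2 (-5041) (by norm_num) (by norm_num),
      padicParity_eq 0 (-20164) (by norm_num) (by norm_num)]
    rfl
  · rw [padicParity_eq 3 (-5185) (by norm_num) (by norm_num),
      padicParity_eq 1 (-2440) (by norm_num) (by norm_num)]
    rfl

lemma two_nsmul_eq_zero_of_four_nsmul_eq_zero {Q : specializedCurve6.Point} (hQ : 4 • Q = 0) :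
    2 • Q = 0 := by
  have h₂ : padicDescent 2 (2 • Q) = 0 := by rw [map_nsmul, CharTwo.two_nsmul]
  have hs : signDescent (2 • Q) = 0 := by rw [map_nsmul, CharTwo.two_nsmul]
  have hT : 2 • 2 • Q = 0 := by rwa [smul_smul]
  generalize 2 • Q = T at *
  rcases T with _ | ⟨x, y, h⟩
  · rfl
  rw [padicDescent_some] at h₂
  rw [signDescent_some] at hs
  rcases x_of_two_nsmul_eq_zero hT with rfl | rfl | rfl <;> norm_num [descentValue] at h₂ hs
  · rw [padicParity_eq 5 26137585 (by norm_num) (by norm_num)] at h₂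
    exact absurd h₂ (by decide)
  · norm_num [signParity] at hs
  · rw [padicParity_eq 3 (-5185) (by norm_num) (by norm_num)] at h₂
    exact absurd h₂ (by decide)

end specializedCurve6

/-- `G₁ = (-20740, 497760)` is a rational point of infinite order on
`y² = x³ + 61644x² + 836402720x`. -/
theorem G1_on_specializedCurve6_infinite_order :
    ∃ h : specializedCurve6.Nonsingular (-20740) 497760,
      ¬ IsOfFinAddOrder (WeierstrassCurve.Affine.Point.some _ _ h) := by
  have hG₁ : specializedCurve6.Nonsingular (-20740) 497760 := by
    rw [WeierstrassCurve.Affine.nonsingular_iff, WeierstrassCurve.Affine.equation_iff]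
    norm_num [specializedCurve6]
  refine ⟨hG₁, fun hfin => ?_⟩
  have hψ := (specializedCurve6.padicDescent 2 + specializedCurve6.padicDescent 17)
    |>.eq_zero_of_isOfFinAddOrder
      (fun _ => specializedCurve6.padicDescent_two_add_seventeen_eq_zero)
      (fun _ => specializedCurve6.two_nsmul_eq_zero_of_four_nsmul_eq_zero) hfin
  rw [AddMonoidHom.add_apply, specializedCurve6.padicDescent_some,
    specializedCurve6.padicDescent_some] at hψ
  norm_num [descentValue] at hψ
  rw [padicParity_eq 2 (-5185) (by norm_num) (by norm_num),
    padicParity_eq 1 (-1220) (by norm_num) (by norm_num)] at hψ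
  exact absurd hψ (by decide)
end

section
/- The points G₁ = (2880000, 18655065600) and G₂ = (37002889/36, 1971840224123/216) are rational points on the elliptic curve y² = x³ + 17558832x² + 61973480694272x, and both G₁ and G₂ have infinite order in the group of rational points of this curve. -/
/-- The elliptic curve `y² = x³ + 17558832x² + 61973480694272x` over `ℚ`. -/
noncomputable def specializedCurveW6 : WeierstrassCurve.Affine ℚ :=
  { a₁ := 0, a₂ := 17558832, a₃ := 0, a₄ := 61973480694272, a₆ := 0 }

/-!
Let `|·|` be the 2-adic norm. On `y² = x³ + a₂x² + a₄x` with `|a₂|, |a₄| ≤ 1`, take a point with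
`|x| = r²`, `|y| = r³` and `r > 1` (a point of the formal group at 2). The tangent slope
`(3x² + 2a₂x + a₄) / (2y)` has norm `r⁴ / (r³/2) = 2r`, because `|2| = 1/2`, so the double has
size `2r`. Hence the points `2ᵏ • P` have pairwise distinct sizes `2ᵏ r`, and `P` has infinite
order. `G₂` has size `2`. `G₁` is 2-integral, but `2G₁ = (46573524481/22500, …)` has size `2`.
-/

namespace padicNorm

variable {p : ℕ} [Fact p.Prime]

theorem add_eq_left_of_lt {q r : ℚ} (h : padicNorm p r < padicNorm p q) :
    padicNorm p (q + r) = padicNorm p q := by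
  rw [add_eq_max_of_ne h.ne', max_eq_left h.le]

theorem intCast_div_mul_pow {a b : ℤ} (ha : ¬(p : ℤ) ∣ a) (hb : ¬(p : ℤ) ∣ b) (k : ℕ) :
    padicNorm p (a / (b * p ^ k)) = (p : ℚ) ^ k := by
  rw [padicNorm.div, padicNorm.mul, IsAbsoluteValue.abv_pow (padicNorm p), padicNorm_p_of_prime,
    (int_eq_one_iff a).2 ha, (int_eq_one_iff b).2 hb]
  simp

end padicNorm

theorem padicNorm_two_two : padicNorm 2 (2 : ℚ) = 2⁻¹ := by
  simpa using padicNorm.padicNorm_p_of_prime (p := 2)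

namespace WeierstrassCurve.Affine

variable {W : WeierstrassCurve.Affine ℚ}

def HasTwoAdicSize (P : W.Point) (r : ℚ) : Prop :=
  ∃ (x y : ℚ) (h : W.Nonsingular x y),
    P = Point.some x y h ∧ padicNorm 2 x = r ^ 2 ∧ padicNorm 2 y = r ^ 3

theorem hasTwoAdicSize_some {x y : ℚ} (h : W.Nonsingular x y) {a b c d : ℤ} (ha : ¬2 ∣ a)
    (hb : ¬2 ∣ b) (hc : ¬2 ∣ c) (hd : ¬2 ∣ d) (k : ℕ) (hx : x = a / (b * 2 ^ (2 * k)))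
    (hy : y = c / (d * 2 ^ (3 * k))) : HasTwoAdicSize (Point.some x y h) (2 ^ k) := by
  have hx' := padicNorm.intCast_div_mul_pow (p := 2) ha hb (2 * k)
  have hy' := padicNorm.intCast_div_mul_pow (p := 2) hc hd (3 * k)
  push_cast at hx' hy'
  exact ⟨x, y, h, rfl, by rw [hx, hx', pow_mul'], by rw [hy, hy', pow_mul']⟩

theorem Y_ne_negY_of_ne_zero (ha₁ : W.a₁ = 0) (ha₃ : W.a₃ = 0) {x y : ℚ} (hy : y ≠ 0) :
    y ≠ W.negY x y := by
  rw [negY, ha₁, ha₃]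
  intro h
  exact hy (by linarith)

theorem padicNorm_slope_self (ha₁ : W.a₁ = 0) (ha₃ : W.a₃ = 0) (ha₂ : padicNorm 2 W.a₂ ≤ 1)
    (ha₄ : padicNorm 2 W.a₄ ≤ 1) {x y r : ℚ} (hr : 1 < r) (hx : padicNorm 2 x = r ^ 2)
    (hy : padicNorm 2 y = r ^ 3) (hyn : y ≠ W.negY x y) :
    padicNorm 2 (W.slope x x y y) = 2 * r := by
  have h3 : padicNorm 2 (3 : ℚ) = 1 := by
    simpa using (padicNorm.int_eq_one_iff (p := 2) 3).2 (by norm_num)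
  have hr2 : 1 < r ^ 2 := one_lt_pow₀ hr two_ne_zero
  have hlow : padicNorm 2 (2 * W.a₂ * x + W.a₄) < padicNorm 2 (3 * x ^ 2) := by
    refine lt_of_le_of_lt padicNorm.nonarchimedean (max_lt ?_ ?_) <;>
      simp only [padicNorm.mul, IsAbsoluteValue.abv_pow (padicNorm 2), padicNorm_two_two, h3, hx]
    · nlinarith [mul_le_mul_of_nonneg_right ha₂ (sq_nonneg r)]
    · nlinarith
  rw [slope_of_Y_ne rfl hyn, negY, ha₁, ha₃,
    show 3 * x ^ 2 + 2 * W.a₂ * x + W.a₄ - 0 * y = 3 * x ^ 2 + (2 * W.a₂ * x + W.a₄) by ring,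
    show y - (-y - 0 * x - 0) = 2 * y by ring, padicNorm.div, padicNorm.add_eq_left_of_lt hlow,
    padicNorm.mul, padicNorm.mul, IsAbsoluteValue.abv_pow (padicNorm 2), padicNorm_two_two,
    h3, hx, hy]
  field_simp

theorem HasTwoAdicSize.two_nsmul (ha₁ : W.a₁ = 0) (ha₃ : W.a₃ = 0) (ha₂ : padicNorm 2 W.a₂ ≤ 1)
    (ha₄ : padicNorm 2 W.a₄ ≤ 1) {P : W.Point} {r : ℚ} (hP : HasTwoAdicSize P r) (hr : 1 < r) :
    HasTwoAdicSize (2 • P) (2 * r) := by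
  obtain ⟨x, y, h, rfl, hx, hy⟩ := hP
  have hy₀ : y ≠ 0 := by
    rintro rfl
    exact (pow_pos (zero_lt_one.trans hr) 3).ne (padicNorm.zero ▸ hy)
  have hyn : y ≠ W.negY x y := Y_ne_negY_of_ne_zero ha₁ ha₃ hy₀
  have hℓ := padicNorm_slope_self ha₁ ha₃ ha₂ ha₄ hr hx hy hyn
  set ℓ := W.slope x x y y
  have hr2 : 1 < r ^ 2 := one_lt_pow₀ hr two_ne_zero
  have hx' : padicNorm 2 (W.addX x x ℓ) = (2 * r) ^ 2 := by
    have hlow : padicNorm 2 (-W.a₂ - 2 * x) < padicNorm 2 (ℓ ^ 2) := by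
      rw [sub_eq_add_neg]
      refine lt_of_le_of_lt padicNorm.nonarchimedean (max_lt ?_ ?_) <;>
        simp only [padicNorm.neg, padicNorm.mul, IsAbsoluteValue.abv_pow (padicNorm 2),
          padicNorm_two_two, hx, hℓ]
      · nlinarith
      · nlinarith
    rw [addX, ha₁, show ℓ ^ 2 + 0 * ℓ - W.a₂ - x - x = ℓ ^ 2 + (-W.a₂ - 2 * x) by ring,
      padicNorm.add_eq_left_of_lt hlow, IsAbsoluteValue.abv_pow (padicNorm 2), hℓ]
  have hxx : padicNorm 2 (W.addX x x ℓ - x) = (2 * r) ^ 2 := by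
    rw [sub_eq_add_neg, padicNorm.add_eq_left_of_lt (by rw [padicNorm.neg, hx, hx']; nlinarith),
      hx']
  have hy' : padicNorm 2 (W.addY x x y ℓ) = (2 * r) ^ 3 := by
    have hlow : padicNorm 2 y < padicNorm 2 (ℓ * (W.addX x x ℓ - x)) := by
      rw [padicNorm.mul, hℓ, hxx, hy]
      nlinarith
    rw [addY, negAddY, negY, ha₁, ha₃,
      show -(ℓ * (W.addX x x ℓ - x) + y) - 0 * W.addX x x ℓ - 0
        = -(ℓ * (W.addX x x ℓ - x) + y) by ring,
      padicNorm.neg, padicNorm.add_eq_left_of_lt hlow, padicNorm.mul, hℓ, hxx]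
    ring
  exact ⟨_, _, nonsingular_add h h fun hxy => hyn hxy.2,
    by rw [_root_.two_nsmul, Point.add_self_of_Y_ne hyn], hx', hy'⟩

theorem HasTwoAdicSize.two_pow_nsmul (ha₁ : W.a₁ = 0) (ha₃ : W.a₃ = 0)
    (ha₂ : padicNorm 2 W.a₂ ≤ 1) (ha₄ : padicNorm 2 W.a₄ ≤ 1) {P : W.Point} {r : ℚ}
    (hP : HasTwoAdicSize P r) (hr : 1 < r) (k : ℕ) : HasTwoAdicSize (2 ^ k • P) (2 ^ k * r) := by
  induction k with
  | zero => simpa using hP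
  | succ k ih =>
    rw [pow_succ', mul_nsmul', pow_succ', mul_assoc]
    exact ih.two_nsmul ha₁ ha₃ ha₂ ha₄ (one_lt_mul_of_le_of_lt (one_le_pow₀ one_le_two) hr)

theorem HasTwoAdicSize.eq {P : W.Point} {r s : ℚ} (hr : HasTwoAdicSize P r)
    (hs : HasTwoAdicSize P s) (hr₀ : 0 ≤ r) (hs₀ : 0 ≤ s) : r = s := by
  obtain ⟨x, y, h, rfl, hx, -⟩ := hr
  obtain ⟨x', y', h', hP, hx', -⟩ := hs
  obtain ⟨rfl, -⟩ := Point.some.inj hP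
  exact (pow_left_inj₀ hr₀ hs₀ two_ne_zero).1 (hx.symm.trans hx')

theorem HasTwoAdicSize.not_isOfFinAddOrder (ha₁ : W.a₁ = 0) (ha₃ : W.a₃ = 0)
    (ha₂ : padicNorm 2 W.a₂ ≤ 1) (ha₄ : padicNorm 2 W.a₄ ≤ 1) {P : W.Point} {r : ℚ}
    (hP : HasTwoAdicSize P r) (hr : 1 < r) : ¬IsOfFinAddOrder P := by
  intro hfin
  have hsize := hP.two_pow_nsmul ha₁ ha₃ ha₂ ha₄ hr
  have hinj : Function.Injective fun k : ℕ => 2 ^ k • P := by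
    intro k l (hkl : 2 ^ k • P = 2 ^ l • P)
    have hkl' := (hsize k).eq (hkl ▸ hsize l) (by positivity) (by positivity)
    exact Nat.pow_right_injective le_rfl
      (by exact_mod_cast mul_right_cancel₀ (zero_lt_one.trans hr).ne' hkl')
  exact Set.infinite_range_of_injective hinj <|
    hfin.finite_multiples.subset <| Set.range_subset_iff.2 fun k => ⟨2 ^ k, rfl⟩

end WeierstrassCurve.Affine

open WeierstrassCurve.Affine

namespace specializedCurveW6

instance : specializedCurveW6.IsElliptic :=
  ⟨isUnit_iff_ne_zero.2 <| by
    norm_num [specializedCurveW6, WeierstrassCurve.Δ, WeierstrassCurve.b₂, WeierstrassCurve.b₄,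
      WeierstrassCurve.b₆, WeierstrassCurve.b₈]⟩

theorem nonsingular_of_eq {x y : ℚ}
    (h : y ^ 2 = x ^ 3 + 17558832 * x ^ 2 + 61973480694272 * x) :
    specializedCurveW6.Nonsingular x y :=
  equation_iff_nonsingular.1 <| by
    rw [equation_iff]
    simp only [specializedCurveW6]
    linear_combination h

theorem not_isOfFinAddOrder_of_hasTwoAdicSize {P : specializedCurveW6.Point} {r : ℚ}
    (hP : HasTwoAdicSize P r) (hr : 1 < r) : ¬IsOfFinAddOrder P :=
  hP.not_isOfFinAddOrder rfl rfl (by exact_mod_cast padicNorm.of_nat (p := 2) 17558832)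
    (by exact_mod_cast padicNorm.of_nat (p := 2) 61973480694272) hr

theorem hasTwoAdicSize_two_nsmul_G1 (h : specializedCurveW6.Nonsingular 2880000 18655065600) :
    HasTwoAdicSize (2 • Point.some _ _ h) (2 ^ 1) := by
  have hyn : (18655065600 : ℚ) ≠ specializedCurveW6.negY 2880000 18655065600 := by
    norm_num [specializedCurveW6]
  rw [two_nsmul, Point.add_self_of_Y_ne hyn]
  exact hasTwoAdicSize_some _ (a := 46573524481) (b := 5625) (c := -49185112164460129)
    (d := 421875) (by norm_num) (by norm_num) (by norm_num) (by norm_num) 1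
    (by norm_num [WeierstrassCurve.Affine.slope, specializedCurveW6])
    (by norm_num [WeierstrassCurve.Affine.slope, addY, specializedCurveW6])

theorem hasTwoAdicSize_G2
    (h : specializedCurveW6.Nonsingular (37002889 / 36) (1971840224123 / 216)) :
    HasTwoAdicSize (Point.some _ _ h) (2 ^ 1) :=
  hasTwoAdicSize_some h (a := 37002889) (b := 9) (c := 1971840224123) (d := 27)
    (by norm_num) (by norm_num) (by norm_num) (by norm_num) 1 (by norm_num) (by norm_num)

end specializedCurveW6

/-- `G₁ = (2880000, 18655065600)` and `G₂ = (37002889/36, 1971840224123/216)` are rational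
points of infinite order on `y² = x³ + 17558832x² + 61973480694272x`. -/
theorem G1_G2_on_specializedCurveW6_infinite_order :
    (∃ h : specializedCurveW6.Nonsingular 2880000 18655065600,
      ¬ IsOfFinAddOrder (WeierstrassCurve.Affine.Point.some _ _ h)) ∧
    (∃ h : specializedCurveW6.Nonsingular (37002889 / 36) (1971840224123 / 216),
      ¬ IsOfFinAddOrder (WeierstrassCurve.Affine.Point.some _ _ h)) := by
  have hG₁ : specializedCurveW6.Nonsingular 2880000 18655065600 :=
    specializedCurveW6.nonsingular_of_eq (by norm_num)
  have hG₂ : specializedCurveW6.Nonsingular (37002889 / 36) (1971840224123 / 216) :=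
    specializedCurveW6.nonsingular_of_eq (by norm_num)
  refine ⟨⟨hG₁, fun hfin => ?_⟩, ⟨hG₂, ?_⟩⟩
  · exact specializedCurveW6.not_isOfFinAddOrder_of_hasTwoAdicSize
      (specializedCurveW6.hasTwoAdicSize_two_nsmul_G1 hG₁) (by norm_num) hfin.nsmul
  · exact specializedCurveW6.not_isOfFinAddOrder_of_hasTwoAdicSize
      (specializedCurveW6.hasTwoAdicSize_G2 hG₂) (by norm_num)
end

section
/- Let a = 125/117, b = 689/400 and c = 14353373/13130325. Then {a, b, c} is a strong rational D(-1)-triple, and moreover b - 1 is a square of a rational number and both 26(a - 1) and 26(c - 1) are squares of rational numbers; consequently {1, a, b, c} is a strong D(-1)-quadruple over the quadratic field ℚ(√26), i.e. all pairwise products of its elements (including products of an element with itself) minus 1 are squares in ℚ(√26). -/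
/-- A rational `x` is a square in the quadratic field `ℚ(√26)`, i.e. `x = (p + q√26)²` for
some rationals `p`, `q`. -/
def IsSquareInQsqrt26 (x : ℚ) : Prop :=
  ∃ p q : ℚ, (x : ℝ) = ((p : ℝ) + (q : ℝ) * Real.sqrt 26) ^ 2

lemma ratSq {x r : ℚ} (h : x = r ^ 2) : IsSquareInQsqrt26 x :=
  ⟨r, 0, by push_cast [h]; ring⟩

lemma sqrtSq {x q : ℚ} (h : x = 26 * q ^ 2) : IsSquareInQsqrt26 x := by
  refine ⟨0, q, ?_⟩
  have h26 : Real.sqrt 26 ^ 2 = 26 := Real.sq_sqrt (by norm_num)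
  push_cast [h]
  rw [add_pow_two]
  rw [mul_pow, h26]
  ring

/-- For `a = 125/117`, `b = 689/400`, `c = 14353373/13130325`: `{a, b, c}` is a strong
rational `D(-1)`-triple, `b - 1`, `26(a - 1)` and `26(c - 1)` are rational squares, and
`{1, a, b, c}` is a strong `D(-1)`-quadruple over `ℚ(√26)` (all pairwise products of its
elements, including self-products, minus `1` are squares in `ℚ(√26)`). -/
theorem strong_quadruple_over_Qsqrt26 (a b c : ℚ)
    (ha : a = 125 / 117) (hb : b = 689 / 400) (hc : c = 14353373 / 13130325) :
    IsStrongDminus1Triple a b c ∧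
    IsSquare (b - 1) ∧ IsSquare (26 * (a - 1)) ∧ IsSquare (26 * (c - 1)) ∧
    ((1 : ℚ) ≠ a ∧ (1 : ℚ) ≠ b ∧ (1 : ℚ) ≠ c ∧ a ≠ b ∧ a ≠ c ∧ b ≠ c ∧
      a ≠ 0 ∧ b ≠ 0 ∧ c ≠ 0 ∧
      IsSquareInQsqrt26 (1 * 1 - 1) ∧ IsSquareInQsqrt26 (1 * a - 1) ∧
      IsSquareInQsqrt26 (1 * b - 1) ∧ IsSquareInQsqrt26 (1 * c - 1) ∧
      IsSquareInQsqrt26 (a * a - 1) ∧ IsSquareInQsqrt26 (a * b - 1) ∧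
      IsSquareInQsqrt26 (a * c - 1) ∧ IsSquareInQsqrt26 (b * b - 1) ∧
      IsSquareInQsqrt26 (b * c - 1) ∧ IsSquareInQsqrt26 (c * c - 1)) := by
  subst ha hb hc
  refine ⟨⟨by norm_num, by norm_num, by norm_num, by norm_num, by norm_num, by norm_num,
      ⟨44/117, by norm_num⟩, ⟨561/400, by norm_num⟩, ⟨5797748/13130325, by norm_num⟩,
      ⟨11/12, by norm_num⟩, ⟨3212/7839, by norm_num⟩, ⟨18887/20100, by norm_num⟩⟩,
    ⟨17/20, by norm_num⟩, ⟨4/3, by norm_num⟩, ⟨1564/1005, by norm_num⟩,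
    by norm_num, by norm_num, by norm_num, by norm_num, by norm_num, by norm_num,
    by norm_num, by norm_num, by norm_num,
    ratSq (r := 0) (by norm_num),
    sqrtSq (q := 2/39) (by norm_num),
    ratSq (r := 17/20) (by norm_num),
    sqrtSq (q := 782/13065) (by norm_num),
    ratSq (r := 44/117) (by norm_num),
    ratSq (r := 11/12) (by norm_num),
    ratSq (r := 3212/7839) (by norm_num),
    ratSq (r := 561/400) (by norm_num),
    ratSq (r := 18887/20100) (by norm_num),
    ratSq (r := 5797748/13130325) (by norm_num)⟩
end

section
/- For every rational number t with t ≠ 0, t ≠ 1 and t ≠ -1, and a = (t²+1)/(2t), b = (t⁴+18t²+1)/(8t(t²+1)), the numbers a² - 1, b² - 1 and ab - 1 are all squares of rational numbers; thus whenever a ≠ b, the set {a, b} is a strong rational D(-1)-pair. -/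
/-- For `t ≠ 0, ±1`, `a = (t² + 1)/(2t)` and `b = (t⁴ + 18t² + 1)/(8t(t² + 1))`, the numbers
`a² - 1`, `b² - 1` and `ab - 1` are all rational squares; thus whenever `a ≠ b`, the set
`{a, b}` is a strong rational `D(-1)`-pair. -/
theorem explicit_strong_pair (t : ℚ) (h0 : t ≠ 0) (h1 : t ≠ 1) (h2 : t ≠ -1)
    (a b : ℚ) (ha : a = (t ^ 2 + 1) / (2 * t))
    (hb : b = (t ^ 4 + 18 * t ^ 2 + 1) / (8 * t * (t ^ 2 + 1))) :
    (IsSquare (a ^ 2 - 1) ∧ IsSquare (b ^ 2 - 1) ∧ IsSquare (a * b - 1)) ∧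
    (a ≠ b → a ≠ b ∧ a ≠ 0 ∧ b ≠ 0 ∧
      IsSquare (a ^ 2 - 1) ∧ IsSquare (b ^ 2 - 1) ∧ IsSquare (a * b - 1)) := by
  have hq : (t ^ 2 + 1 : ℚ) ≠ 0 := by positivity
  have hsq1 : a ^ 2 - 1 = ((t ^ 2 - 1) / (2 * t)) ^ 2 := by
    subst ha; field_simp; ring
  have hsq2 : b ^ 2 - 1 = ((t ^ 4 - 14 * t ^ 2 + 1) / (8 * t * (t ^ 2 + 1))) ^ 2 := by
    subst hb; field_simp; ring
  have hsq3 : a * b - 1 = ((t ^ 2 + 1) / (4 * t)) ^ 2 := by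
    subst ha; subst hb; field_simp; ring
  have s1 : IsSquare (a ^ 2 - 1) := ⟨(t ^ 2 - 1) / (2 * t), by rw [hsq1]; ring⟩
  have s2 : IsSquare (b ^ 2 - 1) := ⟨(t ^ 4 - 14 * t ^ 2 + 1) / (8 * t * (t ^ 2 + 1)), by rw [hsq2]; ring⟩
  have s3 : IsSquare (a * b - 1) := ⟨(t ^ 2 + 1) / (4 * t), by rw [hsq3]; ring⟩
  have ha0 : a ≠ 0 := by
    rw [ha]; exact div_ne_zero hq (by simpa using h0)
  have hb0 : b ≠ 0 := by
    rw [hb]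
    refine div_ne_zero ?_ (by positivity)
    intro h
    have : (t ^ 2 + 9) ^ 2 = 80 := by nlinarith
    have h9 : (0:ℚ) < t ^ 2 + 9 := by positivity
    have : t ^ 2 + 9 = Real.sqrt 80 → False := by intro _; nlinarith [sq_nonneg t]
    nlinarith [sq_nonneg (t ^ 2 + 9 - 9), sq_nonneg t]
  exact ⟨⟨s1, s2, s3⟩, fun hab => ⟨hab, ha0, hb0, s1, s2, s3⟩⟩
end
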